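/- Let R(a) be an invertible operator on V ⊗ V depending on a parameter a and satisfying the Yang–Baxter equation R₁₂(a₁−a₂) R₁₃(a₁−a₃) R₂₃(a₂−a₃) = R₂₃(a₂−a₃) R₁₃(a₁−a₃) R₁₂(a₁−a₂). Let z be an invertible operator on V with [z ⊗ z, R(a)] = 0 for all a. Then the transfer matrices T_z(u) = tr₁((z ⊗ 1) R₁₂(u)) acting on the second factor satisfy [T_z(u), T_z(u')] = 0 for all u, u', provided additionally R₁₂(u−u') is invertible (Baxter commutativity). -/

import Mathlib

/-!
Write `T_z(u) T_z(u')` as the partial trace over the first two factors of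
`(z ⊗ z)₁₂ R₁₃(u) R₂₃(u')`, and `T_z(u') T_z(u)` likewise with `R₂₃(u') R₁₃(u)`.
The Yang–Baxter equation at `(u, u', 0)` says that `R₁₂(u - u')` intertwines `R₁₃(u) R₂₃(u')`
with `R₂₃(u') R₁₃(u)`, and `R₁₂(u - u')` commutes with `(z ⊗ z)₁₂`. The partial trace over
factors 1, 2 is invariant under conjugation by an invertible operator acting in those factors,
so the two products agree.
-/

open Matrix Kronecker

variable {K : Type*} [Field K] {d : ℕ}

/-- `M` acting in the factors 1,2 of `V ⊗ V ⊗ V` (matrix form, `V = K^d`). -/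
def act12 (M : Matrix (Fin d × Fin d) (Fin d × Fin d) K) :
    Matrix (Fin d × Fin d × Fin d) (Fin d × Fin d × Fin d) K :=
  Matrix.of fun p q => M (p.1, p.2.1) (q.1, q.2.1) * (if p.2.2 = q.2.2 then 1 else 0)

/-- `M` acting in the factors 1,3 of `V ⊗ V ⊗ V`. -/
def act13 (M : Matrix (Fin d × Fin d) (Fin d × Fin d) K) :
    Matrix (Fin d × Fin d × Fin d) (Fin d × Fin d × Fin d) K :=
  Matrix.of fun p q => M (p.1, p.2.2) (q.1, q.2.2) * (if p.2.1 = q.2.1 then 1 else 0)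

/-- `M` acting in the factors 2,3 of `V ⊗ V ⊗ V`. -/
def act23 (M : Matrix (Fin d × Fin d) (Fin d × Fin d) K) :
    Matrix (Fin d × Fin d × Fin d) (Fin d × Fin d × Fin d) K :=
  Matrix.of fun p q => M (p.2.1, p.2.2) (q.2.1, q.2.2) * (if p.1 = q.1 then 1 else 0)

/-- The transfer matrix `T_z(u) = tr₁((z ⊗ 1) R₁₂(u))`, acting on the second
tensor factor: `T_z(u)_{ij} = Σ_{k,l} z_{kl} R(u)_{(l,i),(k,j)}`. -/
def transferMatrix (z : Matrix (Fin d) (Fin d) K)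
    (Ru : Matrix (Fin d × Fin d) (Fin d × Fin d) K) : Matrix (Fin d) (Fin d) K :=
  Matrix.of fun i j => ∑ k : Fin d, ∑ l : Fin d, z k l * Ru (l, i) (k, j)

lemma act12_mul (M N : Matrix (Fin d × Fin d) (Fin d × Fin d) K) :
    act12 (M * N) = act12 M * act12 N := by
  ext ⟨p1, p2, p3⟩ ⟨q1, q2, q3⟩
  simp [act12, Matrix.mul_apply, Fintype.sum_prod_type]

lemma act12_one : act12 (1 : Matrix (Fin d × Fin d) (Fin d × Fin d) K) = 1 := by
  ext ⟨p1, p2, p3⟩ ⟨q1, q2, q3⟩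
  simp [act12, Matrix.one_apply, Prod.ext_iff]
  aesop

def block12 (X : Matrix (Fin d × Fin d × Fin d) (Fin d × Fin d × Fin d) K) (i j : Fin d) :
    Matrix (Fin d × Fin d) (Fin d × Fin d) K :=
  Matrix.of fun p q => X (p.1, p.2, i) (q.1, q.2, j)

lemma block12_mul_act12 (X : Matrix (Fin d × Fin d × Fin d) (Fin d × Fin d × Fin d) K)
    (M : Matrix (Fin d × Fin d) (Fin d × Fin d) K) (i j : Fin d) :
    block12 (X * act12 M) i j = block12 X i j * M := by
  ext p q
  simp [block12, act12, Matrix.mul_apply, Fintype.sum_prod_type]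

lemma block12_act12_mul (X : Matrix (Fin d × Fin d × Fin d) (Fin d × Fin d × Fin d) K)
    (M : Matrix (Fin d × Fin d) (Fin d × Fin d) K) (i j : Fin d) :
    block12 (act12 M * X) i j = M * block12 X i j := by
  ext p q
  simp [block12, act12, Matrix.mul_apply, Fintype.sum_prod_type]

def partialTrace12 (X : Matrix (Fin d × Fin d × Fin d) (Fin d × Fin d × Fin d) K) :
    Matrix (Fin d) (Fin d) K :=
  Matrix.of fun i j => (block12 X i j).trace

lemma partialTrace12_mul_act12_comm
    (X : Matrix (Fin d × Fin d × Fin d) (Fin d × Fin d × Fin d) K)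
    (M : Matrix (Fin d × Fin d) (Fin d × Fin d) K) :
    partialTrace12 (X * act12 M) = partialTrace12 (act12 M * X) := by
  ext i j
  simp only [partialTrace12, Matrix.of_apply, block12_mul_act12, block12_act12_mul]
  exact Matrix.trace_mul_comm _ _

lemma partialTrace12_act12_kronecker_mul_act13_mul_act23 (z : Matrix (Fin d) (Fin d) K)
    (M N : Matrix (Fin d × Fin d) (Fin d × Fin d) K) :
    partialTrace12 (act12 (z ⊗ₖ z) * act13 M * act23 N) =
      transferMatrix z M * transferMatrix z N := by
  ext i j
  simp only [partialTrace12, block12, Matrix.trace, Matrix.diag, act12, act13, act23,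
    transferMatrix, Matrix.mul_apply, Matrix.of_apply, Fintype.sum_prod_type,
    Matrix.kroneckerMap_apply, mul_ite, ite_mul, mul_one, mul_zero, zero_mul,
    Finset.sum_ite_eq, Finset.sum_ite_eq', Finset.mem_univ, if_true, Finset.sum_ite_irrel,
    Finset.sum_const_zero, Finset.mul_sum, Finset.sum_mul]
  -- make the index contracted by the matrix product on the right the outermost summation
  conv_lhs => enter [2, a, 2, b]; rw [Finset.sum_comm]
  conv_lhs => enter [2, a]; rw [Finset.sum_comm]
  rw [Finset.sum_comm]
  conv_lhs => enter [2, e]; rw [Finset.sum_comm]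
  conv_lhs => enter [2, e, 2, b]; rw [Finset.sum_comm]
  simp only [mul_comm, mul_left_comm, mul_assoc]

lemma partialTrace12_act12_kronecker_mul_act23_mul_act13 (z : Matrix (Fin d) (Fin d) K)
    (M N : Matrix (Fin d × Fin d) (Fin d × Fin d) K) :
    partialTrace12 (act12 (z ⊗ₖ z) * act23 N * act13 M) =
      transferMatrix z N * transferMatrix z M := by
  ext i j
  simp only [partialTrace12, block12, Matrix.trace, Matrix.diag, act12, act13, act23,
    transferMatrix, Matrix.mul_apply, Matrix.of_apply, Fintype.sum_prod_type,
    Matrix.kroneckerMap_apply, mul_ite, ite_mul, mul_one, mul_zero, zero_mul,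
    Finset.sum_ite_eq, Finset.sum_ite_eq', Finset.mem_univ, if_true, Finset.sum_ite_irrel,
    Finset.sum_const_zero, Finset.mul_sum, Finset.sum_mul]
  -- make the index contracted by the matrix product on the right the outermost summation
  conv_lhs => enter [2, a, 2, b]; rw [Finset.sum_comm]
  conv_lhs => enter [2, a]; rw [Finset.sum_comm]
  rw [Finset.sum_comm]
  conv_lhs => enter [2, e, 2, a]; rw [Finset.sum_comm]
  simp only [mul_comm, mul_left_comm, mul_assoc]

lemma partialTrace12_eq_of_semiconjBy {P : Matrix (Fin d × Fin d) (Fin d × Fin d) K}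
    (hP : IsUnit P) {X Y : Matrix (Fin d × Fin d × Fin d) (Fin d × Fin d × Fin d) K}
    (h : SemiconjBy (act12 P) X Y) : partialTrace12 X = partialTrace12 Y := by
  obtain ⟨U, rfl⟩ := hP
  calc partialTrace12 X = partialTrace12 (act12 ↑U⁻¹ * (act12 ↑U * X)) := by
        rw [← mul_assoc, ← act12_mul, U.inv_mul, act12_one, one_mul]
    _ = partialTrace12 (act12 ↑U * X * act12 ↑U⁻¹) := by
        rw [partialTrace12_mul_act12_comm]
    _ = partialTrace12 Y := by
        rw [h.eq, mul_assoc, ← act12_mul, U.mul_inv, act12_one, mul_one]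

theorem stmt8_general (A : Type*) [AddCommGroup A]
    (R : A → Matrix (Fin d × Fin d) (Fin d × Fin d) K)
    (hYB : ∀ a₁ a₂ a₃ : A,
      act12 (R (a₁ - a₂)) * act13 (R (a₁ - a₃)) * act23 (R (a₂ - a₃)) =
      act23 (R (a₂ - a₃)) * act13 (R (a₁ - a₃)) * act12 (R (a₁ - a₂)))
    (z : Matrix (Fin d) (Fin d) K)
    (hzz : ∀ a, (z ⊗ₖ z) * R a = R a * (z ⊗ₖ z)) :
    ∀ u u' : A, IsUnit (R (u - u')) →
      transferMatrix z (R u) * transferMatrix z (R u') =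
        transferMatrix z (R u') * transferMatrix z (R u) := by
  intro u u' hR
  have hzR : Commute (act12 (R (u - u'))) (act12 (z ⊗ₖ z)) := by
    rw [Commute, SemiconjBy, ← act12_mul, ← act12_mul, hzz]
  have hYB' : SemiconjBy (act12 (R (u - u'))) (act13 (R u) * act23 (R u'))
      (act23 (R u') * act13 (R u)) := by
    simpa only [SemiconjBy, sub_zero, mul_assoc] using hYB u u' 0
  rw [← partialTrace12_act12_kronecker_mul_act13_mul_act23,
    ← partialTrace12_act12_kronecker_mul_act23_mul_act13, mul_assoc, mul_assoc]
  exact partialTrace12_eq_of_semiconjBy hR (SemiconjBy.mul_right hzR hYB')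

/-- Baxter commutativity: if `R(a) ∈ GL(V ⊗ V)` satisfies the Yang–Baxter equation
(with additive spectral parameters in an abelian group `A`) and `z ∈ GL(V)`
satisfies `[z ⊗ z, R(a)] = 0` for all `a`, then the transfer matrices
`T_z(u) = tr₁((z ⊗ 1) R₁₂(u))` commute: `[T_z(u), T_z(u')] = 0`, provided
`R(u − u')` is invertible. -/
theorem stmt8 (A : Type*) [AddCommGroup A]
    (R : A → Matrix (Fin d × Fin d) (Fin d × Fin d) K)
    (hRinv : ∀ a, IsUnit (R a))
    (hYB : ∀ a₁ a₂ a₃ : A,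
      act12 (R (a₁ - a₂)) * act13 (R (a₁ - a₃)) * act23 (R (a₂ - a₃)) =
      act23 (R (a₂ - a₃)) * act13 (R (a₁ - a₃)) * act12 (R (a₁ - a₂)))
    (z : Matrix (Fin d) (Fin d) K) (hz : IsUnit z)
    (hzz : ∀ a, (z ⊗ₖ z) * R a = R a * (z ⊗ₖ z)) :
    ∀ u u' : A, IsUnit (R (u - u')) →
      transferMatrix z (R u) * transferMatrix z (R u') =
        transferMatrix z (R u') * transferMatrix z (R u) :=
  stmt8_general A R hYB z hzz
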